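/- arXiv:1508.04914 — 2 statements merged into one kernel-verified Lean document; each statement's English description precedes it below -/
import Mathlib

section
/- Let H be a real Hilbert space, Q a nonempty closed convex subset of H, and g : Q × Q → ℝ a monotone bifunction on Q. Let α, β > 0 and u, v ∈ H, and suppose w_α, w_β ∈ Q satisfy g(w_α, y) + (1/α)⟨y − w_α, w_α − u⟩ ≥ 0 for all y ∈ Q and g(w_β, y) + (1/β)⟨y − w_β, w_β − v⟩ ≥ 0 for all y ∈ Q. Then ‖w_α − w_β‖ ≤ ‖v − u‖ + (|β − α|/β)‖w_β − v‖. -/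
/-!
Testing the defining inequality of `w₁ = T_α(u)` at `w₂` and that of `w₂ = T_β(v)` at `w₁`,
adding them and using monotonicity of `g` gives
`⟪w₁ - w₂, w₁ - u⟫ ≤ (α / β) ⟪w₁ - w₂, w₂ - v⟫`. Splitting `w₁ - u = (w₁ - w₂) + (w₂ - v) + (v - u)`
turns this into `‖w₁ - w₂‖² ≤ ⟪w₁ - w₂, (α / β - 1) • (w₂ - v) + (u - v)⟫`, and Cauchy–Schwarz
finishes.
-/

open RealInnerProductSpace

section

variable {H : Type*} [NormedAddCommGroup H] [InnerProductSpace ℝ H]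

theorem norm_le_norm_of_norm_sq_le_inner {x y : H} (h : ‖x‖ ^ 2 ≤ ⟪x, y⟫) : ‖x‖ ≤ ‖y‖ := by
  have hxy : ‖x‖ * ‖x‖ ≤ ‖x‖ * ‖y‖ := by nlinarith [real_inner_le_norm x y]
  rcases (norm_nonneg x).eq_or_lt with hx | hx
  · rw [← hx]
    exact norm_nonneg y
  · exact le_of_mul_le_mul_left hxy hx

/-- `w` is the resolvent point `T_α^g(u)` of `g` on `Q`. -/
def IsResolventPoint (Q : Set H) (g : H → H → ℝ) (α : ℝ) (u w : H) : Prop :=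
  w ∈ Q ∧ ∀ y ∈ Q, g w y + (1 / α) * ⟪y - w, w - u⟫ ≥ 0

namespace IsResolventPoint

variable {Q : Set H} {g : H → H → ℝ} {α β : ℝ} {u v w₁ w₂ : H}

theorem inner_le_div_mul_inner (hmono : ∀ u ∈ Q, ∀ v ∈ Q, g u v + g v u ≤ 0) (hα : 0 < α)
    (h₁ : IsResolventPoint Q g α u w₁) (h₂ : IsResolventPoint Q g β v w₂) :
    ⟪w₁ - w₂, w₁ - u⟫ ≤ (α / β) * ⟪w₁ - w₂, w₂ - v⟫ := by
  have h₁₂ := h₁.2 w₂ h₂.1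
  have h₂₁ := h₂.2 w₁ h₁.1
  rw [← neg_sub w₁ w₂, inner_neg_left, mul_neg, one_div_mul_eq_div] at h₁₂
  rw [one_div_mul_eq_div] at h₂₁
  have hsum : ⟪w₁ - w₂, w₁ - u⟫ / α ≤ ⟪w₁ - w₂, w₂ - v⟫ / β := by
    linarith [hmono w₁ h₁.1 w₂ h₂.1]
  calc ⟪w₁ - w₂, w₁ - u⟫ ≤ ⟪w₁ - w₂, w₂ - v⟫ / β * α := (div_le_iff₀ hα).1 hsum
    _ = (α / β) * ⟪w₁ - w₂, w₂ - v⟫ := by ring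

theorem norm_sq_le_inner (hmono : ∀ u ∈ Q, ∀ v ∈ Q, g u v + g v u ≤ 0) (hα : 0 < α)
    (h₁ : IsResolventPoint Q g α u w₁) (h₂ : IsResolventPoint Q g β v w₂) :
    ‖w₁ - w₂‖ ^ 2 ≤ ⟪w₁ - w₂, (α / β - 1) • (w₂ - v) + (u - v)⟫ := by
  have hsplit : w₁ - u = (w₁ - w₂) + (w₂ - v) - (u - v) := by abel
  have := h₁.inner_le_div_mul_inner hmono hα h₂
  rw [hsplit, inner_sub_right, inner_add_right, real_inner_self_eq_norm_sq] at this
  rw [inner_add_right, real_inner_smul_right]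
  linarith

end IsResolventPoint

end

theorem resolvent_two_parameters_general
    {H : Type*} [NormedAddCommGroup H] [InnerProductSpace ℝ H]
    (Q : Set H)
    (g : H → H → ℝ)
    (hmono : ∀ u ∈ Q, ∀ v ∈ Q, g u v + g v u ≤ 0)
    (α β : ℝ) (hα : 0 < α) (hβ : 0 < β) (u v : H)
    (wα wβ : H) (hwαQ : wα ∈ Q) (hwβQ : wβ ∈ Q)
    (hwα : ∀ y ∈ Q, g wα y + (1 / α) * (inner ℝ (y - wα) (wα - u) : ℝ) ≥ 0)
    (hwβ : ∀ y ∈ Q, g wβ y + (1 / β) * (inner ℝ (y - wβ) (wβ - v) : ℝ) ≥ 0) :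
    ‖wα - wβ‖ ≤ ‖v - u‖ + (|β - α| / β) * ‖wβ - v‖ := by
  have hkey := IsResolventPoint.norm_sq_le_inner hmono hα ⟨hwαQ, hwα⟩ ⟨hwβQ, hwβ⟩
  have hcoeff : |α / β - 1| = |β - α| / β := by
    rw [div_sub_one hβ.ne', abs_div, abs_of_pos hβ, abs_sub_comm]
  calc ‖wα - wβ‖ ≤ ‖(α / β - 1) • (wβ - v) + (u - v)‖ := norm_le_norm_of_norm_sq_le_inner hkey
    _ ≤ ‖(α / β - 1) • (wβ - v)‖ + ‖u - v‖ := norm_add_le _ _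
    _ = ‖v - u‖ + (|β - α| / β) * ‖wβ - v‖ := by
      rw [norm_smul, Real.norm_eq_abs, hcoeff, norm_sub_rev u v, add_comm]

/-- Resolvent estimate for two parameters: if `w_α = T_α^g(u)` and `w_β = T_β^g(v)`, then
`‖w_α − w_β‖ ≤ ‖v − u‖ + (|β − α|/β)‖w_β − v‖`. -/
theorem resolvent_two_parameters
    {H : Type*} [NormedAddCommGroup H] [InnerProductSpace ℝ H] [CompleteSpace H]
    (Q : Set H) (hQne : Q.Nonempty) (hQcl : IsClosed Q) (hQcv : Convex ℝ Q)
    (g : H → H → ℝ)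
    (hmono : ∀ u ∈ Q, ∀ v ∈ Q, g u v + g v u ≤ 0)
    (α β : ℝ) (hα : 0 < α) (hβ : 0 < β) (u v : H)
    (wα wβ : H) (hwαQ : wα ∈ Q) (hwβQ : wβ ∈ Q)
    (hwα : ∀ y ∈ Q, g wα y + (1 / α) * (inner ℝ (y - wα) (wα - u) : ℝ) ≥ 0)
    (hwβ : ∀ y ∈ Q, g wβ y + (1 / β) * (inner ℝ (y - wβ) (wβ - v) : ℝ) ≥ 0) :
    ‖wα - wβ‖ ≤ ‖v - u‖ + (|β - α| / β) * ‖wβ - v‖ :=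
  resolvent_two_parameters_general Q g hmono α β hα hβ u v wα wβ hwαQ hwβQ hwα hwβ
end

section
/- (Strong convergence for the split equilibrium problem.) Let H₁, H₂ be real Hilbert spaces, C ⊆ H₁ and Q ⊆ H₂ nonempty closed convex sets, A : H₁ → H₂ a bounded linear operator with adjoint A*, g : Q × Q → ℝ satisfying Assumptions A, and f : C × C → ℝ satisfying Assumptions B with constants c₁, c₂ > 0. Let x¹ ∈ C₁ = C, let 0 < a ≤ b < min{1/(2c₁), 1/(2c₂)} and {λ_k} ⊆ [a, b], let μ > 0 with μ‖A‖² < 1, and let {α_k} ⊆ (0, ∞) with liminf_{k→∞} α_k > 0. Suppose the sequences {x^k}, {y^k}, {z^k}, {u^k}, {s^k} and sets {C_k} satisfy, for every k ≥ 1: y^k ∈ C minimizes y ↦ λ_k f(x^k, y) + (1/2)‖y − x^k‖² over C; z^k ∈ C minimizes y ↦ λ_k f(y^k, y) + (1/2)‖y − x^k‖² over C; u^k ∈ Q satisfies g(u^k, v) + (1/α_k)⟨v − u^k, u^k − A z^k⟩ ≥ 0 for all v ∈ Q; s^k = P_C(z^k + μ A*(u^k − A z^k)); C_{k+1} = {r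 ∈ C_k : ‖s^k − r‖ ≤ ‖z^k − r‖ ≤ ‖x^k − r‖}; and x^{k+1} = P_{C_{k+1}}(x¹). If Ω = {x* ∈ C : f(x*, y) ≥ 0 for all y ∈ C, A x* ∈ Q, and g(A x*, v) ≥ 0 for all v ∈ Q} is nonempty, then there exists p ∈ Ω such that {x^k} and {z^k} converge strongly to p and {u^k} converges strongly to A p ∈ Sol(Q, g). -/
/-!
Every point `q` of `Ω` lies in all the sets `Cs k`: the extragradient step gives
`‖z - q‖² ≤ ‖x - q‖² - (1 - 2λc₁)‖x - y‖² - (1 - 2λc₂)‖y - z‖²` (pseudomonotonicity and the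
Lipschitz-type condition), and the resolvent-plus-projection step gives
`‖s - q‖² ≤ ‖z - q‖² - μ‖u - Az‖²` (monotonicity of `g` and `μ‖A‖² < 1`). As `x k` is the
projection of `x 0` onto the decreasing sets `Cs k`, the numbers `‖x k - x 0‖²` increase, are
bounded by `‖q - x 0‖²`, and dominate `‖x m - x k‖²` through their increments, so `x` is Cauchy
with some limit `p`. Since `x (k + 1) ∈ Cs (k + 1)`, also `z k, s k → p`, and the two descent
inequalities then force `x k - y k → 0` and `u k - A (z k) → 0`. Passing to the limit in the
optimality condition of `y k` shows that `p` solves the equilibrium problem for `f`; the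
resolvent inequalities give `g v (A p) ≤ 0` for all `v ∈ Q`, which Minty's lemma turns into
`A p ∈ Sol(Q, g)`.
-/

open Filter Topology

section SeminormedAddCommGroup

variable {F G : Type*} [SeminormedAddCommGroup F] [SeminormedAddCommGroup G]

theorem tendsto_of_norm_sub_succ_le {x z : ℕ → F} {p : F} (hx : Tendsto x atTop (𝓝 p))
    (hz : ∀ k, ‖z k - x (k + 1)‖ ≤ ‖x k - x (k + 1)‖) : Tendsto z atTop (𝓝 p) := by
  have hx' : Tendsto (fun k => x (k + 1)) atTop (𝓝 p) := hx.comp (tendsto_add_atTop_nat 1)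
  have hgap : Tendsto (fun k => ‖x k - x (k + 1)‖) atTop (𝓝 0) := by
    simpa using (hx.sub hx').norm
  rw [tendsto_iff_norm_sub_tendsto_zero] at hx' ⊢
  refine squeeze_zero (fun _ => norm_nonneg _) (fun k => ?_) (by simpa using hgap.add hx')
  calc ‖z k - p‖ ≤ ‖z k - x (k + 1)‖ + ‖x (k + 1) - p‖ := norm_sub_le_norm_sub_add_norm_sub _ _ _
    _ ≤ ‖x k - x (k + 1)‖ + ‖x (k + 1) - p‖ := by gcongr; exact hz k

theorem norm_sub_le_of_mul_sq_le {c : ℝ} (hc : 0 ≤ c) {d : G} {v w q : F}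
    (h : c * ‖d‖ ^ 2 ≤ ‖w - q‖ ^ 2 - ‖v - q‖ ^ 2) : ‖v - q‖ ≤ ‖w - q‖ := by
  rw [← sq_le_sq₀ (norm_nonneg _) (norm_nonneg _)]
  nlinarith [mul_nonneg hc (sq_nonneg ‖d‖)]

theorem tendsto_zero_of_mul_sq_le {c : ℝ} (hc : 0 < c) {d : ℕ → G} {v w : ℕ → F} {p q : F}
    (h : ∀ k, c * ‖d k‖ ^ 2 ≤ ‖w k - q‖ ^ 2 - ‖v k - q‖ ^ 2)
    (hv : Tendsto v atTop (𝓝 p)) (hw : Tendsto w atTop (𝓝 p)) : Tendsto d atTop (𝓝 0) := by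
  have hgap : Tendsto (fun k => (‖w k - q‖ ^ 2 - ‖v k - q‖ ^ 2) / c) atTop (𝓝 0) := by
    simpa using (((hw.sub_const q).norm.pow 2).sub ((hv.sub_const q).norm.pow 2)).div_const c
  have hsq : Tendsto (fun k => ‖d k‖ ^ 2) atTop (𝓝 0) :=
    squeeze_zero (fun _ => sq_nonneg _) (fun k => (le_div_iff₀' hc).mpr (h k)) hgap
  rw [tendsto_zero_iff_norm_tendsto_zero]
  simpa using hsq.sqrt

def hybridCut (K : Set F) (x z s : F) : Set F :=
  {r ∈ K | ‖s - r‖ ≤ ‖z - r‖ ∧ ‖z - r‖ ≤ ‖x - r‖}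

theorem antitone_of_hybridCut {K : ℕ → Set F} {x z s : ℕ → F}
    (hK : ∀ k, K (k + 1) = hybridCut (K k) (x k) (z k) (s k)) : Antitone K :=
  antitone_nat_of_succ_le fun k => by rw [hK k]; exact fun r hr => hr.1

theorem mem_of_hybridCut {K : ℕ → Set F} {x z s : ℕ → F}
    (hK : ∀ k, K (k + 1) = hybridCut (K k) (x k) (z k) (s k)) {q : F} (h0 : q ∈ K 0)
    (hq : ∀ k, ‖s k - q‖ ≤ ‖z k - q‖ ∧ ‖z k - q‖ ≤ ‖x k - q‖) (k : ℕ) : q ∈ K k := by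
  induction k with
  | zero => exact h0
  | succ k ih => rw [hK k]; exact ⟨ih, hq k⟩

end SeminormedAddCommGroup

section InnerProductSpace

variable {E : Type*} [NormedAddCommGroup E] [InnerProductSpace ℝ E]

theorem norm_sub_sq_add_norm_sub_sq_le {x p w : E} (h : inner ℝ (x - p) (w - p) ≤ 0) :
    ‖w - p‖ ^ 2 + ‖p - x‖ ^ 2 ≤ ‖w - x‖ ^ 2 := by
  have hinner : inner ℝ (w - p) (p - x) = -inner ℝ (x - p) (w - p) := by
    rw [real_inner_comm, ← inner_neg_left, neg_sub]
  rw [show w - x = (w - p) + (p - x) by abel, norm_add_sq_real, hinner]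
  linarith

theorem cauchySeq_of_inner_nonpos_of_antitone {K : ℕ → Set E} (hK : Antitone K) {x : ℕ → E}
    (hx : ∀ k, x k ∈ K k ∧ ∀ w ∈ K k, inner ℝ (x 0 - x k) (w - x k) ≤ 0) {p : E}
    (hp : ∀ k, p ∈ K k) : CauchySeq x := by
  have hstep : ∀ {k m}, k ≤ m → ‖x m - x k‖ ^ 2 + ‖x k - x 0‖ ^ 2 ≤ ‖x m - x 0‖ ^ 2 :=
    fun hkm => norm_sub_sq_add_norm_sub_sq_le ((hx _).2 _ (hK hkm (hx _).1))
  set t : ℕ → ℝ := fun k => ‖x k - x 0‖ ^ 2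
  have ht_mono : Monotone t := fun k m hkm => by nlinarith [hstep hkm, sq_nonneg ‖x m - x k‖]
  have ht_bdd : BddAbove (Set.range t) := ⟨‖p - x 0‖ ^ 2, by
    rintro _ ⟨k, rfl⟩
    nlinarith [norm_sub_sq_add_norm_sub_sq_le ((hx k).2 p (hp k)), sq_nonneg ‖p - x k‖]⟩
  have ht := tendsto_atTop_ciSup ht_mono ht_bdd
  rw [Metric.cauchySeq_iff']
  intro ε hε
  obtain ⟨N, hN⟩ := ((tendsto_order.mp ht).1 _ (sub_lt_self _ (pow_pos hε 2))).exists
  refine ⟨N, fun n hn => ?_⟩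
  rw [dist_eq_norm, ← sq_lt_sq₀ (norm_nonneg _) hε.le]
  nlinarith [hstep hn, ht_mono.ge_of_tendsto ht n]

theorem exists_tendsto_of_hybridCut [CompleteSpace E] {K : ℕ → Set E} {x z s : ℕ → E}
    (hK : ∀ k, K (k + 1) = hybridCut (K k) (x k) (z k) (s k))
    (hx : ∀ k, x k ∈ K k ∧ ∀ w ∈ K k, inner ℝ (x 0 - x k) (w - x k) ≤ 0) {q : E}
    (hq : ∀ k, q ∈ K k) :
    ∃ p, Tendsto x atTop (𝓝 p) ∧ Tendsto z atTop (𝓝 p) ∧ Tendsto s atTop (𝓝 p) := by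
  obtain ⟨p, hxp⟩ := cauchySeq_tendsto_of_complete
    (cauchySeq_of_inner_nonpos_of_antitone (antitone_of_hybridCut hK) hx hq)
  have hcut : ∀ k, ‖s k - x (k + 1)‖ ≤ ‖z k - x (k + 1)‖ ∧
      ‖z k - x (k + 1)‖ ≤ ‖x k - x (k + 1)‖ := fun k => by
    have h := (hx (k + 1)).1
    rw [hK k] at h
    exact h.2
  exact ⟨p, hxp, tendsto_of_norm_sub_succ_le hxp fun k => (hcut k).2,
    tendsto_of_norm_sub_succ_le hxp fun k => (hcut k).1.trans (hcut k).2⟩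

theorem ConvexOn.inner_sub_le_of_isMinOn {C : Set E} {ψ : E → ℝ} (hψ : ConvexOn ℝ C ψ)
    {x y w : E} (hy : y ∈ C) (hw : w ∈ C)
    (hmin : IsMinOn (fun v => ψ v + 1 / 2 * ‖v - x‖ ^ 2) C y) :
    inner ℝ (x - y) (w - y) ≤ ψ w - ψ y := by
  set D := ψ w - ψ y - inner ℝ (x - y) (w - y)
  have hD_add : ∀ t ∈ Set.Ioc (0 : ℝ) 1, 0 ≤ D + t / 2 * ‖w - y‖ ^ 2 := by
    rintro t ⟨ht0, ht1⟩
    have hwt : t • w + (1 - t) • y ∈ C := hψ.1 hw hy ht0.le (by linarith) (by ring)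
    have hconv := hψ.2 hw hy ht0.le (by linarith : 0 ≤ 1 - t) (by ring)
    have hnorm : ‖t • w + (1 - t) • y - x‖ ^ 2
        = ‖y - x‖ ^ 2 - 2 * t * inner ℝ (x - y) (w - y) + t ^ 2 * ‖w - y‖ ^ 2 := by
      rw [show t • w + (1 - t) • y - x = (y - x) + t • (w - y) by module, norm_add_sq_real,
        real_inner_smul_right, norm_smul, mul_pow, Real.norm_eq_abs, sq_abs,
        ← neg_sub x y, inner_neg_left]
      ring
    have hmin_t := isMinOn_iff.mp hmin _ hwt
    simp only [hnorm, smul_eq_mul] at hmin_t hconv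
    nlinarith
  have hlim : Tendsto (fun t : ℝ => D + t / 2 * ‖w - y‖ ^ 2) (𝓝[>] 0) (𝓝 D) := by
    have : Continuous (fun t : ℝ => D + t / 2 * ‖w - y‖ ^ 2) := by fun_prop
    simpa using this.continuousWithinAt.tendsto (x := 0) (s := Set.Ioi 0)
  have : 0 ≤ D := ge_of_tendsto hlim (mem_of_superset (Ioc_mem_nhdsGT zero_lt_one) hD_add)
  linarith

theorem inner_sub_le_of_prox {C : Set E} {f : E → E → ℝ} (hf4 : ∀ x ∈ C, ConvexOn ℝ C (f x))
    {lam : ℝ} (hlam : 0 ≤ lam) {v x y w : E} (hv : v ∈ C)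
    (hy : y ∈ C ∧ ∀ w ∈ C,
      lam * f v y + (1 / 2) * ‖y - x‖ ^ 2 ≤ lam * f v w + (1 / 2) * ‖w - x‖ ^ 2)
    (hw : w ∈ C) : inner ℝ (x - y) (w - y) ≤ lam * (f v w - f v y) := by
  rw [mul_sub]
  exact ((hf4 v hv).smul hlam).inner_sub_le_of_isMinOn hy.1 hw (isMinOn_iff.mpr hy.2)

theorem norm_sub_sq_le_of_extragradient {x y z p : E} {fxy fxz fyz fyp lam c₁ c₂ : ℝ}
    (hlam : 0 ≤ lam) (hy : inner ℝ (x - y) (z - y) ≤ lam * (fxz - fxy))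
    (hz : inner ℝ (x - z) (p - z) ≤ lam * (fyp - fyz))
    (hlip : fxy + fyz ≥ fxz - c₁ * ‖x - y‖ ^ 2 - c₂ * ‖y - z‖ ^ 2) (hp : fyp ≤ 0) :
    ‖z - p‖ ^ 2 ≤ ‖x - p‖ ^ 2 - (1 - 2 * lam * c₁) * ‖x - y‖ ^ 2
      - (1 - 2 * lam * c₂) * ‖y - z‖ ^ 2 := by
  have hxp : ‖x - p‖ ^ 2 = ‖z - p‖ ^ 2 + ‖x - y‖ ^ 2 + ‖y - z‖ ^ 2
      - 2 * inner ℝ (x - y) (z - y) - 2 * inner ℝ (x - z) (p - z) := by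
    rw [show x - p = (x - y) + (y - z) + (z - p) by abel, show z - y = -(y - z) by abel,
      show p - z = -(z - p) by abel, show x - z = (x - y) + (y - z) by abel]
    simp only [norm_add_sq_real, inner_add_left, inner_neg_right]
    ring
  have hlip' : lam * (fxz - fxy - fyz) ≤ lam * (c₁ * ‖x - y‖ ^ 2 + c₂ * ‖y - z‖ ^ 2) :=
    mul_le_mul_of_nonneg_left (by linarith) hlam
  nlinarith [mul_nonpos_of_nonneg_of_nonpos hlam hp]

theorem inner_sub_nonpos_of_resolvent {Q : Set E} {g : E → E → ℝ} {α : ℝ} (hα : 0 < α)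
    {u w q : E} (hu : ∀ v ∈ Q, g u v + 1 / α * inner ℝ (v - u) (u - w) ≥ 0) (hq : q ∈ Q)
    (hgq : g u q ≤ 0) : inner ℝ (u - q) (u - w) ≤ 0 := by
  have hneg : inner ℝ (u - q) (u - w) = -inner ℝ (q - u) (u - w) := by
    rw [← inner_neg_left, neg_sub]
  have : 0 ≤ inner ℝ (q - u) (u - w) := by
    by_contra! hlt
    linarith [hu q hq, mul_neg_of_pos_of_neg (one_div_pos.mpr hα) hlt]
  linarith

end InnerProductSpace

section Equilibrium

variable {E : Type*} [NormedAddCommGroup E] [InnerProductSpace ℝ E]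

def SeqJointlyWeaklyContinuousOn (C : Set E) (f : E → E → ℝ) : Prop :=
  ∀ (xs ys : ℕ → E) (x y : E), (∀ k, xs k ∈ C) → (∀ k, ys k ∈ C) → x ∈ C → y ∈ C →
    (∀ w : E, Tendsto (fun k => inner ℝ (xs k) w) atTop (𝓝 (inner ℝ x w))) →
    (∀ w : E, Tendsto (fun k => inner ℝ (ys k) w) atTop (𝓝 (inner ℝ y w))) →
    Tendsto (fun k => f (xs k) (ys k)) atTop (𝓝 (f x y))

theorem SeqJointlyWeaklyContinuousOn.tendsto {C : Set E} {f : E → E → ℝ}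
    (hf : SeqJointlyWeaklyContinuousOn C f) {xs ys : ℕ → E} {x y : E} (hxs : ∀ k, xs k ∈ C)
    (hys : ∀ k, ys k ∈ C) (hx : x ∈ C) (hy : y ∈ C) (hxs_lim : Tendsto xs atTop (𝓝 x))
    (hys_lim : Tendsto ys atTop (𝓝 y)) :
    Tendsto (fun k => f (xs k) (ys k)) atTop (𝓝 (f x y)) :=
  hf xs ys x y hxs hys hx hy (fun _ => hxs_lim.inner tendsto_const_nhds)
    (fun _ => hys_lim.inner tendsto_const_nhds)

theorem extragradient_descent {C : Set E} {f : E → E → ℝ} {c₁ c₂ lam b : ℝ}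
    (hf2 : ∀ x ∈ C, ∀ y ∈ C, 0 ≤ f x y → f y x ≤ 0) (hf4 : ∀ x ∈ C, ConvexOn ℝ C (f x))
    (hf5 : ∀ x ∈ C, ∀ y ∈ C, ∀ z ∈ C,
      f x y + f y z ≥ f x z - c₁ * ‖x - y‖ ^ 2 - c₂ * ‖y - z‖ ^ 2)
    (hc₁ : 0 ≤ c₁) (hc₂ : 0 ≤ c₂) (hlam : lam ∈ Set.Icc 0 b) (hb₂ : 2 * b * c₂ ≤ 1)
    {x y z q : E} (hx : x ∈ C)
    (hy : y ∈ C ∧ ∀ w ∈ C,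
      lam * f x y + (1 / 2) * ‖y - x‖ ^ 2 ≤ lam * f x w + (1 / 2) * ‖w - x‖ ^ 2)
    (hz : z ∈ C ∧ ∀ w ∈ C,
      lam * f y z + (1 / 2) * ‖z - x‖ ^ 2 ≤ lam * f y w + (1 / 2) * ‖w - x‖ ^ 2)
    (hq : q ∈ C) (hqf : ∀ w ∈ C, f q w ≥ 0) :
    (1 - 2 * b * c₁) * ‖x - y‖ ^ 2 ≤ ‖x - q‖ ^ 2 - ‖z - q‖ ^ 2 := by
  have h := norm_sub_sq_le_of_extragradient hlam.1
    (inner_sub_le_of_prox hf4 hlam.1 hx hy hz.1) (inner_sub_le_of_prox hf4 hlam.1 hy.1 hz hq)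
    (hf5 x hx y hy.1 z hz.1) (hf2 q hq y hy.1 (hqf y hy.1))
  nlinarith [mul_le_mul_of_nonneg_right hlam.2 hc₁, mul_le_mul_of_nonneg_right hlam.2 hc₂,
    sq_nonneg ‖x - y‖, sq_nonneg ‖y - z‖]

theorem nonneg_of_tendsto_prox {C : Set E} {f : E → E → ℝ} (hf1 : ∀ x ∈ C, f x x = 0)
    (hf3 : SeqJointlyWeaklyContinuousOn C f) (hf4 : ∀ x ∈ C, ConvexOn ℝ C (f x)) {a : ℝ}
    (ha : 0 < a) {lam : ℕ → ℝ} (hlam : ∀ k, a ≤ lam k) {x y : ℕ → E} (hxC : ∀ k, x k ∈ C)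
    (hy : ∀ k, y k ∈ C ∧ ∀ w ∈ C,
      lam k * f (x k) (y k) + (1 / 2) * ‖y k - x k‖ ^ 2 ≤
        lam k * f (x k) w + (1 / 2) * ‖w - x k‖ ^ 2)
    {p w : E} (hp : p ∈ C) (hw : w ∈ C) (hx_lim : Tendsto x atTop (𝓝 p))
    (hy_lim : Tendsto y atTop (𝓝 p)) : 0 ≤ f p w := by
  have hfxw := hf3.tendsto hxC (fun _ => hw) hp hw hx_lim tendsto_const_nhds
  have hfxy := hf3.tendsto hxC (fun k => (hy k).1) hp hp hx_lim hy_lim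
  rw [hf1 p hp] at hfxy
  have hinner : Tendsto (fun k => inner ℝ (x k - y k) (w - y k)) atTop (𝓝 0) := by
    simpa using (hx_lim.sub hy_lim).inner (tendsto_const_nhds.sub hy_lim)
  have hlower : Tendsto (fun k => f (x k) (y k) - |inner ℝ (x k - y k) (w - y k)| / a) atTop
      (𝓝 0) := by
    simpa using hfxy.sub (hinner.abs.div_const a)
  refine le_of_tendsto_of_tendsto' hlower hfxw fun k => ?_
  have hlamk : 0 < lam k := ha.trans_le (hlam k)
  set i := inner ℝ (x k - y k) (w - y k)
  have hopt : i / lam k ≤ f (x k) w - f (x k) (y k) :=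
    (div_le_iff₀' hlamk).mpr (inner_sub_le_of_prox hf4 hlamk.le (hxC k) (hy k) hw)
  have hi : -(|i| / a) ≤ i / lam k :=
    calc -(|i| / a) ≤ -|i| / lam k := by
          rw [neg_div]; exact neg_le_neg (div_le_div_of_nonneg_left (abs_nonneg i) ha (hlam k))
      _ ≤ i / lam k := div_le_div_of_nonneg_right (neg_abs_le i) hlamk.le
  linarith

/-- Minty's lemma for equilibrium problems. -/
theorem nonneg_of_dual_nonpos {Q : Set E} {g : E → E → ℝ}
    (hg1 : ∀ u ∈ Q, g u u = 0)
    (hg3 : ∀ u ∈ Q, ∀ v ∈ Q, ∀ w ∈ Q,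
      limsup (fun t : ℝ => g (t • w + (1 - t) • u) v) (𝓝[>] 0) ≤ g u v)
    (hg4 : ∀ u ∈ Q, ConvexOn ℝ Q (g u)) {q : E} (hq : q ∈ Q)
    (hdual : ∀ v ∈ Q, g v q ≤ 0) : ∀ v ∈ Q, 0 ≤ g q v := by
  intro v hv
  have hpos : ∀ t ∈ Set.Ioc (0 : ℝ) 1, 0 ≤ g (t • v + (1 - t) • q) v := by
    rintro t ⟨ht0, ht1⟩
    have hvt : t • v + (1 - t) • q ∈ Q := (hg4 q hq).1 hv hq ht0.le (by linarith) (by ring)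
    have hconv := (hg4 _ hvt).2 hv hq ht0.le (by linarith : 0 ≤ 1 - t) (by ring)
    rw [hg1 _ hvt, smul_eq_mul, smul_eq_mul] at hconv
    nlinarith [mul_nonpos_of_nonneg_of_nonpos (by linarith : 0 ≤ 1 - t) (hdual _ hvt)]
  -- `limsup` in `ℝ` is the `sInf` of the eventual upper bounds, all nonnegative here
  -- (and `sInf ∅ = 0`), so no boundedness is needed.
  have hlimsup : 0 ≤ limsup (fun t : ℝ => g (t • v + (1 - t) • q) v) (𝓝[>] 0) := by
    rw [limsup_eq]
    refine Real.sInf_nonneg fun c (hc : ∀ᶠ t in 𝓝[>] 0, _ ≤ c) => ?_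
    obtain ⟨t, htc, ht⟩ := (hc.and (mem_of_superset (Ioc_mem_nhdsGT zero_lt_one) hpos)).exists
    exact le_trans ht htc
  exact hlimsup.trans (hg3 q hq v hv v hv)

theorem le_zero_of_tendsto_resolvent {Q : Set E} {g : E → E → ℝ}
    (hg2 : ∀ u ∈ Q, ∀ v ∈ Q, g u v + g v u ≤ 0) {v q : E} (hv : v ∈ Q)
    (hlsc : LowerSemicontinuousWithinAt (g v) Q q) {α : ℕ → ℝ}
    (hα : ∃ c > 0, ∀ᶠ k in atTop, c ≤ α k) {u w : ℕ → E} (huQ : ∀ k, u k ∈ Q)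
    (hres : ∀ k, g (u k) v + 1 / α k * inner ℝ (v - u k) (u k - w k) ≥ 0)
    (hu : Tendsto u atTop (𝓝 q)) (huw : Tendsto (fun k => u k - w k) atTop (𝓝 0)) :
    g v q ≤ 0 := by
  obtain ⟨c, hc, hαc⟩ := hα
  have hbound : ∀ᶠ k in atTop, g v (u k) ≤ ‖v - u k‖ * ‖u k - w k‖ / c := by
    filter_upwards [hαc] with k hk
    have hαk : 0 < α k := hc.trans_le hk
    have hres' := hres k
    rw [one_div_mul_eq_div] at hres'
    calc g v (u k) ≤ inner ℝ (v - u k) (u k - w k) / α k := by linarith [hg2 _ (huQ k) v hv]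
      _ ≤ ‖v - u k‖ * ‖u k - w k‖ / α k :=
        div_le_div_of_nonneg_right (real_inner_le_norm _ _) hαk.le
      _ ≤ ‖v - u k‖ * ‖u k - w k‖ / c := div_le_div_of_nonneg_left (by positivity) hc hk
  have hbound_lim : Tendsto (fun k => ‖v - u k‖ * ‖u k - w k‖ / c) atTop (𝓝 0) := by
    simpa using (((tendsto_const_nhds.sub hu).norm).mul huw.norm).div_const c
  by_contra! hpos
  have hlow := (tendsto_nhdsWithin_iff.mpr ⟨hu, Eventually.of_forall huQ⟩).eventually
    (hlsc _ (half_lt_self hpos))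
  obtain ⟨k, hk_low, hk_up, hk_lim⟩ :=
    (hlow.and (hbound.and (hbound_lim.eventually_lt_const (half_pos hpos)))).exists
  linarith

end Equilibrium

section Split

variable {H₁ H₂ : Type*} [NormedAddCommGroup H₁] [InnerProductSpace ℝ H₁] [CompleteSpace H₁]
  [NormedAddCommGroup H₂] [InnerProductSpace ℝ H₂] [CompleteSpace H₂]

theorem norm_add_smul_adjoint_sub_sq_le (A : H₁ →L[ℝ] H₂) {μ : ℝ} (hμ0 : 0 ≤ μ)
    (hμ : μ * ‖A‖ ^ 2 ≤ 1) {z p : H₁} {u : H₂} (h : inner ℝ (u - A p) (u - A z) ≤ 0) :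
    ‖z + μ • A.adjoint (u - A z) - p‖ ^ 2 ≤ ‖z - p‖ ^ 2 - μ * ‖u - A z‖ ^ 2 := by
  set e := u - A z
  have hexpand : ‖z + μ • A.adjoint e - p‖ ^ 2
      = ‖z - p‖ ^ 2 + 2 * μ * (inner ℝ (u - A p) e - ‖e‖ ^ 2) + μ ^ 2 * ‖A.adjoint e‖ ^ 2 := by
    rw [show z + μ • A.adjoint e - p = (z - p) + μ • A.adjoint e by abel, norm_add_sq_real,
      real_inner_smul_right, ContinuousLinearMap.adjoint_inner_right, norm_smul, mul_pow,
      Real.norm_eq_abs, sq_abs, map_sub,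
      show A z - A p = (u - A p) - e from (sub_sub_sub_cancel_left _ _ _).symm, inner_sub_left,
      real_inner_self_eq_norm_sq]
    ring
  have hadj : ‖A.adjoint e‖ ^ 2 ≤ ‖A‖ ^ 2 * ‖e‖ ^ 2 := by
    rw [← mul_pow, ← ContinuousLinearMap.adjoint.norm_map A]
    exact pow_le_pow_left₀ (norm_nonneg _) (A.adjoint.le_opNorm e) 2
  rw [hexpand]
  nlinarith [mul_le_mul_of_nonneg_left hadj (sq_nonneg μ), mul_nonneg hμ0 (sq_nonneg ‖e‖),
    mul_nonpos_of_nonneg_of_nonpos hμ0 h]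

theorem split_descent (A : H₁ →L[ℝ] H₂) {C : Set H₁} {Q : Set H₂} {g : H₂ → H₂ → ℝ}
    (hg2 : ∀ u ∈ Q, ∀ v ∈ Q, g u v + g v u ≤ 0) {α μ : ℝ} (hα : 0 < α) (hμ0 : 0 ≤ μ)
    (hμ : μ * ‖A‖ ^ 2 ≤ 1) {z s q : H₁} {u : H₂}
    (hu : u ∈ Q ∧ ∀ v ∈ Q, g u v + (1 / α) * inner ℝ (v - u) (u - A z) ≥ 0)
    (hs : ∀ w ∈ C, inner ℝ ((z + μ • A.adjoint (u - A z)) - s) (w - s) ≤ 0)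
    (hq : q ∈ C) (hAq : A q ∈ Q) (hAqg : ∀ v ∈ Q, g (A q) v ≥ 0) :
    μ * ‖u - A z‖ ^ 2 ≤ ‖z - q‖ ^ 2 - ‖s - q‖ ^ 2 := by
  have hres := inner_sub_nonpos_of_resolvent hα hu.2 hAq
    (by linarith [hg2 u hu.1 (A q) hAq, hAqg u hu.1])
  have hproj := norm_sub_sq_add_norm_sub_sq_le (hs q hq)
  have hstep := norm_add_smul_adjoint_sub_sq_le A hμ0 hμ hres
  rw [norm_sub_rev q s, norm_sub_rev q] at hproj
  nlinarith [sq_nonneg ‖s - (z + μ • A.adjoint (u - A z))‖]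

end Split

/-- Indexing: `Cs k` is the paper's `C_{k+1}` and `x 0` is `x¹`. -/
theorem strong_convergence_SEP_general
    {H₁ : Type*} [NormedAddCommGroup H₁] [InnerProductSpace ℝ H₁] [CompleteSpace H₁]
    {H₂ : Type*} [NormedAddCommGroup H₂] [InnerProductSpace ℝ H₂] [CompleteSpace H₂]
    (C : Set H₁) (hCcl : IsClosed C)
    (Q : Set H₂) (hQcl : IsClosed Q)
    (A : H₁ →L[ℝ] H₂)
    (g : H₂ → H₂ → ℝ)
    (hgA1 : ∀ u ∈ Q, g u u = 0)
    (hgA2 : ∀ u ∈ Q, ∀ v ∈ Q, g u v + g v u ≤ 0)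
    (hgA3 : ∀ u ∈ Q, ∀ v ∈ Q, ∀ w ∈ Q,
      limsup (fun lam : ℝ => g (lam • w + (1 - lam) • u) v) (nhdsWithin 0 (Set.Ioi 0)) ≤ g u v)
    (hgA4 : ∀ u ∈ Q, ConvexOn ℝ Q (g u) ∧ LowerSemicontinuousOn (g u) Q)
    (f : H₁ → H₁ → ℝ) (c₁ c₂ : ℝ) (hc₁ : 0 < c₁) (hc₂ : 0 < c₂)
    (hfB1 : ∀ x ∈ C, f x x = 0)
    (hfB2 : ∀ x ∈ C, ∀ y ∈ C, 0 ≤ f x y → f y x ≤ 0)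
    (hfB3 : ∀ (xs ys : ℕ → H₁) (x y : H₁), (∀ k, xs k ∈ C) → (∀ k, ys k ∈ C) →
      x ∈ C → y ∈ C →
      (∀ w : H₁, Tendsto (fun k => (inner ℝ (xs k) w : ℝ)) atTop (nhds (inner ℝ x w))) →
      (∀ w : H₁, Tendsto (fun k => (inner ℝ (ys k) w : ℝ)) atTop (nhds (inner ℝ y w))) →
      Tendsto (fun k => f (xs k) (ys k)) atTop (nhds (f x y)))
    (hfB4 : ∀ x ∈ C, ConvexOn ℝ C (f x))
    (hfB5 : ∀ x ∈ C, ∀ y ∈ C, ∀ z ∈ C,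
      f x y + f y z ≥ f x z - c₁ * ‖x - y‖ ^ 2 - c₂ * ‖y - z‖ ^ 2)
    (a b : ℝ) (ha : 0 < a) (hb : b < min (1 / (2 * c₁)) (1 / (2 * c₂)))
    (lam : ℕ → ℝ) (hlam : ∀ k, lam k ∈ Set.Icc a b)
    (μ : ℝ) (hμ0 : 0 < μ) (hμ : μ * ‖A‖ ^ 2 < 1)
    (αk : ℕ → ℝ) (hαk : ∀ k, 0 < αk k)
    (hαkinf : ∃ c > 0, ∀ᶠ k in atTop, c ≤ αk k)
    (x y z : ℕ → H₁) (u : ℕ → H₂) (s : ℕ → H₁) (Cs : ℕ → Set H₁)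
    (hCs0 : Cs 0 = C)
    (hx0 : x 0 ∈ C)
    (hy : ∀ k, y k ∈ C ∧ ∀ w ∈ C,
      lam k * f (x k) (y k) + (1 / 2) * ‖y k - x k‖ ^ 2 ≤
        lam k * f (x k) w + (1 / 2) * ‖w - x k‖ ^ 2)
    (hz : ∀ k, z k ∈ C ∧ ∀ w ∈ C,
      lam k * f (y k) (z k) + (1 / 2) * ‖z k - x k‖ ^ 2 ≤
        lam k * f (y k) w + (1 / 2) * ‖w - x k‖ ^ 2)
    (hu : ∀ k, u k ∈ Q ∧ ∀ v ∈ Q,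
      g (u k) v + (1 / αk k) * (inner ℝ (v - u k) (u k - A (z k)) : ℝ) ≥ 0)
    (hs : ∀ k, s k ∈ C ∧ ∀ w ∈ C,
      (inner ℝ ((z k + μ • (ContinuousLinearMap.adjoint A) (u k - A (z k))) - s k)
        (w - s k) : ℝ) ≤ 0)
    (hCsrec : ∀ k, Cs (k + 1) =
      {r ∈ Cs k | ‖s k - r‖ ≤ ‖z k - r‖ ∧ ‖z k - r‖ ≤ ‖x k - r‖})
    (hxk : ∀ k, x (k + 1) ∈ Cs (k + 1) ∧ ∀ w ∈ Cs (k + 1),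
      (inner ℝ (x 0 - x (k + 1)) (w - x (k + 1)) : ℝ) ≤ 0)
    (Ω : Set H₁)
    (hΩ : Ω = {xs : H₁ | xs ∈ C ∧ (∀ w ∈ C, f xs w ≥ 0) ∧
      A xs ∈ Q ∧ (∀ v ∈ Q, g (A xs) v ≥ 0)})
    (hΩne : Ω.Nonempty) :
    ∃ p ∈ Ω,
      Tendsto x atTop (nhds p) ∧
      Tendsto z atTop (nhds p) ∧
      Tendsto u atTop (nhds (A p)) ∧
      A p ∈ Q ∧ (∀ v ∈ Q, g (A p) v ≥ 0) := by
  subst hΩ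
  obtain ⟨p₀, hp₀C, hp₀f, hp₀AQ, hp₀g⟩ := hΩne
  have hbc : 2 * b * c₁ < 1 ∧ 2 * b * c₂ < 1 := by
    rw [lt_min_iff, lt_div_iff₀ (by positivity), lt_div_iff₀ (by positivity)] at hb
    constructor <;> linarith
  have hproj : ∀ k, x k ∈ Cs k ∧ ∀ w ∈ Cs k, inner ℝ (x 0 - x k) (w - x k) ≤ 0 := by
    rintro (_ | k)
    exacts [⟨hCs0 ▸ hx0, fun w _ => by simp⟩, hxk k]
  have hxC : ∀ k, x k ∈ C := fun k => hCs0 ▸ antitone_of_hybridCut hCsrec k.zero_le (hproj k).1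
  have hdescent_xz : ∀ k, (1 - 2 * b * c₁) * ‖x k - y k‖ ^ 2 ≤ ‖x k - p₀‖ ^ 2 - ‖z k - p₀‖ ^ 2 :=
    fun k => extragradient_descent hfB2 hfB4 hfB5 hc₁.le hc₂.le
      ⟨ha.le.trans (hlam k).1, (hlam k).2⟩ hbc.2.le (hxC k) (hy k) (hz k) hp₀C hp₀f
  have hdescent_zs : ∀ k, μ * ‖u k - A (z k)‖ ^ 2 ≤ ‖z k - p₀‖ ^ 2 - ‖s k - p₀‖ ^ 2 :=
    fun k => split_descent A hgA2 (hαk k) hμ0.le hμ.le (hu k) (hs k).2 hp₀C hp₀AQ hp₀g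
  have hp₀Cs := mem_of_hybridCut hCsrec (hCs0 ▸ hp₀C) fun k =>
    ⟨norm_sub_le_of_mul_sq_le hμ0.le (hdescent_zs k),
      norm_sub_le_of_mul_sq_le (by linarith) (hdescent_xz k)⟩
  obtain ⟨p, hxp, hzp, hsp⟩ := exists_tendsto_of_hybridCut hCsrec hproj hp₀Cs
  have hxy := tendsto_zero_of_mul_sq_le (by linarith) hdescent_xz hzp hxp
  have hue := tendsto_zero_of_mul_sq_le hμ0 hdescent_zs hsp hzp
  have hyp : Tendsto y atTop (𝓝 p) := by simpa using hxp.sub hxy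
  have hup : Tendsto u atTop (𝓝 (A p)) := by simpa using hue.add ((A.continuous.tendsto p).comp hzp)
  have hpC : p ∈ C := hCcl.mem_of_tendsto hxp (.of_forall hxC)
  have hApQ : A p ∈ Q := hQcl.mem_of_tendsto hup (.of_forall fun k => (hu k).1)
  have hpf : ∀ w ∈ C, f p w ≥ 0 := fun w hw =>
    nonneg_of_tendsto_prox hfB1 hfB3 hfB4 ha (fun k => (hlam k).1) hxC hy hpC hw hxp hyp
  have hpg : ∀ v ∈ Q, g (A p) v ≥ 0 :=
    nonneg_of_dual_nonpos hgA1 hgA3 (fun w hw => (hgA4 w hw).1) hApQ fun w hw =>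
      le_zero_of_tendsto_resolvent hgA2 hw ((hgA4 w hw).2 _ hApQ) hαkinf (fun k => (hu k).1)
        (fun k => (hu k).2 w hw) hup hue
  exact ⟨p, ⟨hpC, hpf, hApQ, hpg⟩, hxp, hzp, hup, hApQ, hpg⟩

/-- Strong convergence theorem for the hybrid extragradient algorithm for the split
equilibrium problem (SEP), the special case `S = I`, `T = I`. Here `Cs k` plays the role of
`C_{k+1}` in the paper (so `Cs 0 = C₁ = C`), and `x 0 = x¹`. -/
theorem strong_convergence_SEP
    {H₁ : Type*} [NormedAddCommGroup H₁] [InnerProductSpace ℝ H₁] [CompleteSpace H₁]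
    {H₂ : Type*} [NormedAddCommGroup H₂] [InnerProductSpace ℝ H₂] [CompleteSpace H₂]
    (C : Set H₁) (hCne : C.Nonempty) (hCcl : IsClosed C) (hCcv : Convex ℝ C)
    (Q : Set H₂) (hQne : Q.Nonempty) (hQcl : IsClosed Q) (hQcv : Convex ℝ Q)
    (A : H₁ →L[ℝ] H₂)
    (g : H₂ → H₂ → ℝ)
    (hgA1 : ∀ u ∈ Q, g u u = 0)
    (hgA2 : ∀ u ∈ Q, ∀ v ∈ Q, g u v + g v u ≤ 0)
    (hgA3 : ∀ u ∈ Q, ∀ v ∈ Q, ∀ w ∈ Q,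
      limsup (fun lam : ℝ => g (lam • w + (1 - lam) • u) v) (nhdsWithin 0 (Set.Ioi 0)) ≤ g u v)
    (hgA4 : ∀ u ∈ Q, ConvexOn ℝ Q (g u) ∧ LowerSemicontinuousOn (g u) Q)
    (f : H₁ → H₁ → ℝ) (c₁ c₂ : ℝ) (hc₁ : 0 < c₁) (hc₂ : 0 < c₂)
    (hfB1 : ∀ x ∈ C, f x x = 0)
    (hfB2 : ∀ x ∈ C, ∀ y ∈ C, 0 ≤ f x y → f y x ≤ 0)
    (hfB3 : ∀ (xs ys : ℕ → H₁) (x y : H₁), (∀ k, xs k ∈ C) → (∀ k, ys k ∈ C) →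
      x ∈ C → y ∈ C →
      (∀ w : H₁, Tendsto (fun k => (inner ℝ (xs k) w : ℝ)) atTop (nhds (inner ℝ x w))) →
      (∀ w : H₁, Tendsto (fun k => (inner ℝ (ys k) w : ℝ)) atTop (nhds (inner ℝ y w))) →
      Tendsto (fun k => f (xs k) (ys k)) atTop (nhds (f x y)))
    (hfB4 : ∀ x ∈ C, ConvexOn ℝ C (f x))
    (hfB5 : ∀ x ∈ C, ∀ y ∈ C, ∀ z ∈ C,
      f x y + f y z ≥ f x z - c₁ * ‖x - y‖ ^ 2 - c₂ * ‖y - z‖ ^ 2)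
    (a b : ℝ) (ha : 0 < a) (hab : a ≤ b) (hb : b < min (1 / (2 * c₁)) (1 / (2 * c₂)))
    (lam : ℕ → ℝ) (hlam : ∀ k, lam k ∈ Set.Icc a b)
    (μ : ℝ) (hμ0 : 0 < μ) (hμ : μ * ‖A‖ ^ 2 < 1)
    (αk : ℕ → ℝ) (hαk : ∀ k, 0 < αk k)
    (hαkinf : ∃ c > 0, ∀ᶠ k in atTop, c ≤ αk k)
    (x y z : ℕ → H₁) (u : ℕ → H₂) (s : ℕ → H₁) (Cs : ℕ → Set H₁)
    (hCs0 : Cs 0 = C)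
    (hx0 : x 0 ∈ C)
    (hy : ∀ k, y k ∈ C ∧ ∀ w ∈ C,
      lam k * f (x k) (y k) + (1 / 2) * ‖y k - x k‖ ^ 2 ≤
        lam k * f (x k) w + (1 / 2) * ‖w - x k‖ ^ 2)
    (hz : ∀ k, z k ∈ C ∧ ∀ w ∈ C,
      lam k * f (y k) (z k) + (1 / 2) * ‖z k - x k‖ ^ 2 ≤
        lam k * f (y k) w + (1 / 2) * ‖w - x k‖ ^ 2)
    (hu : ∀ k, u k ∈ Q ∧ ∀ v ∈ Q,
      g (u k) v + (1 / αk k) * (inner ℝ (v - u k) (u k - A (z k)) : ℝ) ≥ 0)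
    (hs : ∀ k, s k ∈ C ∧ ∀ w ∈ C,
      (inner ℝ ((z k + μ • (ContinuousLinearMap.adjoint A) (u k - A (z k))) - s k)
        (w - s k) : ℝ) ≤ 0)
    (hCsrec : ∀ k, Cs (k + 1) =
      {r ∈ Cs k | ‖s k - r‖ ≤ ‖z k - r‖ ∧ ‖z k - r‖ ≤ ‖x k - r‖})
    (hxk : ∀ k, x (k + 1) ∈ Cs (k + 1) ∧ ∀ w ∈ Cs (k + 1),
      (inner ℝ (x 0 - x (k + 1)) (w - x (k + 1)) : ℝ) ≤ 0)
    (Ω : Set H₁)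
    (hΩ : Ω = {xs : H₁ | xs ∈ C ∧ (∀ w ∈ C, f xs w ≥ 0) ∧
      A xs ∈ Q ∧ (∀ v ∈ Q, g (A xs) v ≥ 0)})
    (hΩne : Ω.Nonempty) :
    ∃ p ∈ Ω,
      Tendsto x atTop (nhds p) ∧
      Tendsto z atTop (nhds p) ∧
      Tendsto u atTop (nhds (A p)) ∧
      A p ∈ Q ∧ (∀ v ∈ Q, g (A p) v ≥ 0) :=
  strong_convergence_SEP_general C hCcl Q hQcl A g hgA1 hgA2 hgA3 hgA4 f c₁ c₂ hc₁ hc₂ hfB1 hfB2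
    hfB3 hfB4 hfB5 a b ha hb lam hlam μ hμ0 hμ αk hαk hαkinf x y z u s Cs hCs0 hx0 hy hz hu hs
    hCsrec hxk Ω hΩ hΩne
end
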